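/- arXiv:2301.09493 — 9 statements merged into one kernel-verified Lean document; each statement's English description precedes it below -/
import Mathlib

section
/- For any two distinct vertices x and y of a graph G, the functionality of x is at most sd(x,y) + 1, where sd(x,y) is the number of vertices other than x and y adjacent to exactly one of x and y. -/
open Finset
open scoped Classical

variable {V : Type*}

/-- A vertex `x` is a function of a set `S` of other vertices: there is a Boolean
function `f` such that for every vertex `z` outside `S ∪ {x}`, adjacency of `z`
to `x` is `f` of the adjacencies of `z` to the members of `S`. -/
def IsFunctionOf (G : SimpleGraph V) (x : V) (S : Finset V) : Prop :=
  x ∉ S ∧ ∃ f : (S → Prop) → Prop,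
    ∀ z, z ≠ x → z ∉ S → (G.Adj x z ↔ f fun s => G.Adj z s)

/-- The functionality of a vertex: minimum `k` such that `x` is a function of
`k` other vertices. -/
noncomputable def funVertex [Fintype V] (G : SimpleGraph V) (x : V) : ℕ :=
  sInf {k | ∃ S : Finset V, S.card = k ∧ IsFunctionOf G x S}

/-- `sdPair G x y`: the number of vertices other than `x, y` adjacent to exactly
one of `x` and `y`. -/
noncomputable def sdPair [Fintype V] (G : SimpleGraph V) (x y : V) : ℕ :=
  (univ.filter fun z => z ≠ x ∧ z ≠ y ∧ ¬(G.Adj z x ↔ G.Adj z y)).card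

/-- For any two distinct vertices `x` and `y`, the functionality of `x` is at most
`sd(x,y) + 1`. -/
theorem funVertex_le_sdPair_add_one [Fintype V] (G : SimpleGraph V) (x y : V)
    (hxy : x ≠ y) : funVertex G x ≤ sdPair G x y + 1 := by
  set D := univ.filter fun z => z ≠ x ∧ z ≠ y ∧ ¬(G.Adj z x ↔ G.Adj z y) with hD
  set S := insert y D with hS
  have hxD : x ∉ D := by simp [hD]
  have hxS : x ∉ S := by
    simp only [hS, Finset.mem_insert]
    rintro (h | h)
    · exact hxy h
    · exact hxD h
  have hyS : y ∈ S := Finset.mem_insert_self _ _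
  have hmem : S.card ∈ {k | ∃ S : Finset V, S.card = k ∧ IsFunctionOf G x S} := by
    refine ⟨S, rfl, hxS, ⟨fun g => g ⟨y, hyS⟩, ?_⟩⟩
    intro z hzx hzS
    have hzy : z ≠ y := fun h => hzS (h ▸ hyS)
    have hzD : z ∉ D := fun h => hzS (Finset.mem_insert_of_mem h)
    have : G.Adj z x ↔ G.Adj z y := by
      by_contra h
      exact hzD (by simp [hD, hzx, hzy, h])
    simpa [G.adj_comm x z] using this
  calc funVertex G x ≤ S.card := Nat.sInf_le hmem
    _ ≤ D.card + 1 := Finset.card_insert_le _ _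
    _ = sdPair G x y + 1 := rfl
end

section
/- Let G be an interval graph on n vertices with an interval representation whose 2n endpoints are pairwise distinct and labeled 1,...,2n from left to right, so each vertex is a pair (i,j) with i < j (left and right endpoint labels). If the Manhattan distance |i-p| + |j-q| between two vertices (i,j) and (p,q) equals k, then sd of these two vertices is at most k - 2. -/
open Finset
open scoped Classical

variable {V : Type*}

/-- Interval-graph lemma: with a representation by distinct integer endpoint labels
in `[1, 2n]`, if the Manhattan distance between the endpoint pairs of two vertices
is `k`, then their symmetric difference is at most `k - 2`. -/
theorem sdPair_le_manhattan_sub_two [Fintype V] (G : SimpleGraph V)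
    (L R : V → ℤ)
    (hLR : ∀ v, L v < R v)
    (hrange : ∀ v, (1 ≤ L v ∧ L v ≤ 2 * Fintype.card V) ∧
      (1 ≤ R v ∧ R v ≤ 2 * Fintype.card V))
    (hinj : Function.Injective (Sum.elim L R : V ⊕ V → ℤ))
    (hadj : ∀ u v, G.Adj u v ↔ u ≠ v ∧ L u ≤ R v ∧ L v ≤ R u)
    (u v : V) (huv : u ≠ v) (k : ℤ)
    (hk : |L u - L v| + |R u - R v| = k) :
    (sdPair G u v : ℤ) ≤ k - 2 := by
  
  classical
  have hLL : ∀ x y : V, L x = L y → x = y := fun x y h => by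
    have := hinj (a₁ := Sum.inl x) (a₂ := Sum.inl y) (by simpa using h)
    simpa using this
  have hRR : ∀ x y : V, R x = R y → x = y := fun x y h => by
    have := hinj (a₁ := Sum.inr x) (a₂ := Sum.inr y) (by simpa using h)
    simpa using this
  have hLRne : ∀ x y : V, L x ≠ R y := fun x y h => by
    have := hinj (a₁ := Sum.inl x) (a₂ := Sum.inr y) (by simpa using h)
    simp at this
  set mL := min (L u) (L v) with hmL
  set ML := max (L u) (L v) with hML
  set mR := min (R u) (R v) with hmR
  set MR := max (R u) (R v) with hMR
  set f : V → ℤ := fun z => if R z < ML then R z else L z with hf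
  set T : Finset ℤ := Finset.Ioo mL ML ∪ Finset.Ioo mR MR with hT
  have key : ∀ p q z : V, min (L p) (L q) = mL → max (L p) (L q) = ML →
      min (R p) (R q) = mR → max (R p) (R q) = MR →
      z ≠ p → z ≠ q → L z ≤ R p → L p ≤ R z →
      ¬(L z ≤ R q ∧ L q ≤ R z) → f z ∈ T := by
    intro p q z h1 h2 h3 h4 hzp hzq hzp1 hzp2 hq
    push_neg at hq
    rcases le_or_gt (L z) (R q) with h | h
    · have hlt : R z < L q := hq h
      have h5 : L p < R z := lt_of_le_of_ne hzp2 (hLRne p z)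
      have hLqML : L q ≤ ML := by
        have := le_max_right (L p) (L q); rw [h2] at this; exact this
      have hcond : R z < ML := lt_of_lt_of_le hlt hLqML
      have hfz : f z = R z := if_pos hcond
      rw [hfz]
      refine Finset.mem_union_left _ (Finset.mem_Ioo.mpr ⟨?_, hcond⟩)
      have := min_le_left (L p) (L q); rw [h1] at this
      exact lt_of_le_of_lt this h5
    · have h5 : L z < R p := lt_of_le_of_ne hzp1 (hLRne z p)
      by_cases hcond : R z < ML
      · have hfz : f z = R z := if_pos hcond
        rw [hfz]
        refine Finset.mem_union_left _ (Finset.mem_Ioo.mpr ⟨?_, hcond⟩)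
        have hq1 : L q < R q := hLR q
        have hq2 : mL ≤ L q := by
          have := min_le_right (L p) (L q); rw [h1] at this; exact this
        have hz1 : L z ≤ R z := le_of_lt (hLR z)
        linarith
      · have hfz : f z = L z := if_neg hcond
        rw [hfz]
        refine Finset.mem_union_right _ (Finset.mem_Ioo.mpr ⟨?_, ?_⟩)
        · have := min_le_right (R p) (R q); rw [h3] at this
          exact lt_of_le_of_lt this h
        · have := le_max_left (R p) (R q); rw [h4] at this
          exact lt_of_lt_of_le h5 this
  set S : Finset V := univ.filter fun z => z ≠ u ∧ z ≠ v ∧ ¬(G.Adj z u ↔ G.Adj z v)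
    with hS
  have hmaps : ∀ z ∈ S, f z ∈ T := by
    intro z hz
    rw [hS, Finset.mem_filter] at hz
    obtain ⟨-, hzu, hzv, hziff⟩ := hz
    rw [hadj z u, hadj z v] at hziff
    simp only [hzu, hzv, ne_eq, not_false_iff, true_and] at hziff
    have hcases : ((L z ≤ R u ∧ L u ≤ R z) ∧ ¬(L z ≤ R v ∧ L v ≤ R z)) ∨
        (¬(L z ≤ R u ∧ L u ≤ R z) ∧ (L z ≤ R v ∧ L v ≤ R z)) := by tauto
    rcases hcases with ⟨⟨ha, hb⟩, hc⟩ | ⟨hc, ha, hb⟩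
    · exact key u v z rfl rfl rfl rfl hzu hzv ha hb hc
    · exact key v u z (by rw [min_comm]) (by rw [max_comm]) (by rw [min_comm])
        (by rw [max_comm]) hzv hzu ha hb hc
  have hinjOn : Set.InjOn f ↑S := by
    intro z1 _ z2 _ h
    have e1 : f z1 = R z1 ∨ f z1 = L z1 := by
      simp only [hf]; split_ifs <;> simp
    have e2 : f z2 = R z2 ∨ f z2 = L z2 := by
      simp only [hf]; split_ifs <;> simp
    rcases e1 with e1 | e1 <;> rcases e2 with e2 | e2 <;> rw [e1, e2] at h
    · exact hRR _ _ h
    · exact absurd h.symm (hLRne z2 z1)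
    · exact absurd h (hLRne z1 z2)
    · exact hLL _ _ h
  have hcard1 : S.card ≤ T.card := Finset.card_le_card_of_injOn f hmaps hinjOn
  have hcard2 : T.card ≤ (Finset.Ioo mL ML).card + (Finset.Ioo mR MR).card :=
    Finset.card_union_le _ _
  rw [Int.card_Ioo, Int.card_Ioo] at hcard2
  have e1 : ML - mL = |L u - L v| := (max_sub_min_eq_abs _ _).trans (abs_sub_comm _ _)
  have e2 : MR - mR = |R u - R v| := (max_sub_min_eq_abs _ _).trans (abs_sub_comm _ _)
  have a1 : 1 ≤ |L u - L v| := Int.one_le_abs (sub_ne_zero.mpr (fun h => huv (hLL u v h)))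
  have a2 : 1 ≤ |R u - R v| := Int.one_le_abs (sub_ne_zero.mpr (fun h => huv (hRR u v h)))
  have hsd : sdPair G u v = S.card := by rw [sdPair, hS]
  have t1 : (ML - mL - 1).toNat = ML - mL - 1 := Int.toNat_of_nonneg (by omega)
  have t2 : (MR - mR - 1).toNat = MR - mR - 1 := Int.toNat_of_nonneg (by omega)
  have : (S.card : ℤ) ≤ (ML - mL - 1) + (MR - mR - 1) := by
    have := hcard1.trans hcard2
    push_cast [t1, t2] at *
    omega
  rw [hsd]
  omega
end

section
/- Let p ≥ 2 and let X be a class of K_{2,p}-free triangle-free graphs containing a sequence of graphs G_1, G_2, ... with |V(G_n)| = g(n) for an increasing function g, minimum degree δ(G_n) → ∞, and maximum degree Δ(G_n) = o(g(n)). Then X has unbounded functionality: for every k there is a graph in X in which no vertex is a function of k other vertices. -/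
open Finset
open scoped Classical

variable {V : Type*}

/-- If `X` contains a sequence of `K_{2,p}`-free triangle-free graphs `G_n` on `g n`
vertices with `g` increasing, minimum degree tending to infinity and maximum degree
in `o(g n)`, then the functionality is unbounded: for every `k` some `G_n` has no
vertex that is a function of at most `k` other vertices. -/
theorem unbounded_functionality_of_K2p_free (p : ℕ) (hp : 2 ≤ p)
    (g : ℕ → ℕ) (hg : StrictMono g) (hgpos : ∀ n, 0 < g n)
    (G : ∀ n, SimpleGraph (Fin (g n)))
    (hK2p : ∀ n, ∀ a b : Fin (g n), a ≠ b →
      ((G n).neighborFinset a ∩ (G n).neighborFinset b).card < p)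
    (htriangle : ∀ n, (G n).CliqueFree 3)
    (hmin : Filter.Tendsto (fun n => (G n).minDegree) Filter.atTop Filter.atTop)
    (hmax : (fun n => ((G n).maxDegree : ℝ)) =o[Filter.atTop] fun n => (g n : ℝ)) :
    ∀ k : ℕ, ∃ n, ∀ x : Fin (g n), ∀ S : Finset (Fin (g n)),
      S.card ≤ k → ¬ IsFunctionOf (G n) x S := by
  intro k
  obtain ⟨q, rfl⟩ : ∃ q, p = q + 2 := ⟨p - 2, by omega⟩
  -- choose a good n
  have h1 := hmin.eventually_ge_atTop (k * (q + 2) + 1)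
  have h2 := hmax.def (show (0:ℝ) < 1/(3*(k+1)) by positivity)
  have h3 : ∀ᶠ n in Filter.atTop, 3*(k+1) ≤ g n := by
    filter_upwards [Filter.eventually_ge_atTop (3*(k+1))] with n hn
    exact hn.trans hg.le_apply
  obtain ⟨n, hn1, hn2, hn3⟩ := (h1.and (h2.and h3)).exists
  refine ⟨n, ?_⟩
  set H := G n with hH
  set Δ := H.maxDegree with hΔdef
  -- the key numeric bound
  have hΔlt : (k+1) * (Δ + 1) < g n := by
    have hn2' : (Δ:ℝ) ≤ 1/(3*(k+1)) * (g n : ℝ) := by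
      simpa [Real.norm_natCast] using hn2
    have hg3 : (3*((k:ℝ)+1)) ≤ g n := by exact_mod_cast hn3
    have hk : (0:ℝ) < (k:ℝ)+1 := by positivity
    have h3k : (Δ:ℝ) * (3*((k:ℝ)+1)) ≤ g n := by
      rw [div_mul_eq_mul_div, one_mul] at hn2'
      exact (le_div_iff₀ (by positivity)).mp hn2'
    have : (((k:ℝ)+1) * ((Δ:ℝ)+1)) < g n := by
      nlinarith [h3k, hg3, hk, (Nat.cast_nonneg Δ : (0:ℝ) ≤ Δ), (Nat.cast_nonneg k : (0:ℝ) ≤ k)]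
    exact_mod_cast this
  rintro x S hScard ⟨hxS, f, hf⟩
  -- find z in N(x), not in S, nonadjacent to all of S
  have hxs : ∀ s ∈ S, x ≠ s := fun s hs h => hxS (h ▸ hs)
  have hdegx : k * (q+2) + 1 ≤ (H.neighborFinset x).card := by
    rw [SimpleGraph.card_neighborFinset_eq_degree]
    exact le_trans hn1 (H.minDegree_le_degree x)
  set A := H.neighborFinset x with hA
  set U := S ∪ S.biUnion (fun s => A ∩ H.neighborFinset s) with hU
  have hUcard : U.card ≤ k + k * (q + 1) := by
    calc U.card ≤ S.card + (S.biUnion (fun s => A ∩ H.neighborFinset s)).card :=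
          card_union_le _ _
      _ ≤ S.card + ∑ s ∈ S, (A ∩ H.neighborFinset s).card := by
          gcongr; exact card_biUnion_le
      _ ≤ k + k * (q + 1) := by
          gcongr
          calc ∑ s ∈ S, (A ∩ H.neighborFinset s).card ≤ S.card * (q + 1) := by
                apply Finset.sum_le_card_nsmul
                intro s hs
                have := hK2p n x s (hxs s hs)
                rw [← hH] at this
                have hle : (A ∩ H.neighborFinset s).card ≤
                    (H.neighborFinset x ∩ H.neighborFinset s).card := le_of_eq rfl
                omega
            _ ≤ k * (q + 1) := by gcongr
  have hBne : (A \ U).Nonempty := by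
    rw [← Finset.card_pos]
    have h := Finset.card_le_card_sdiff_add_card (s := A) (t := U)
    have hq : k + k * (q + 1) + 1 ≤ k * (q + 2) + 1 := by ring_nf; omega
    omega
  obtain ⟨z, hzB⟩ := hBne
  rw [mem_sdiff] at hzB
  obtain ⟨hzA, hzU⟩ := hzB
  have hxz : H.Adj x z := by rwa [SimpleGraph.mem_neighborFinset] at hzA
  have hzS : z ∉ S := fun h => hzU (mem_union_left _ h)
  have hzadj : ∀ s ∈ S, ¬ H.Adj z s := by
    intro s hs hadj
    exact hzU (mem_union_right _ (mem_biUnion.mpr ⟨s, hs,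
      mem_inter.mpr ⟨hzA, (H.mem_neighborFinset s z).mpr hadj.symm⟩⟩))
  -- f of the all-false pattern is true
  have hftrue : f (fun s : S => H.Adj z s) := (hf z hxz.ne' hzS).mp hxz
  have hpat : ∀ z' : Fin (g n), (∀ s ∈ S, ¬ H.Adj z' s) →
      (fun s : S => H.Adj z' s) = (fun s : S => H.Adj z s) := by
    intro z' h
    funext s
    exact propext (iff_of_false (h s s.2) (hzadj s s.2))
  -- every vertex with the all-false pattern is adjacent to x
  set C := univ.filter (fun z' : Fin (g n) =>
    z' ≠ x ∧ z' ∉ S ∧ ∀ s ∈ S, ¬ H.Adj z' s) with hC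
  have hCsub : C ⊆ A := by
    intro z' hz'
    rw [mem_filter] at hz'
    obtain ⟨-, hne, hnS, hall⟩ := hz'
    rw [SimpleGraph.mem_neighborFinset]
    refine (hf z' hne hnS).mpr ?_
    rw [hpat z' hall]
    exact hftrue
  have hCcard : C.card ≤ Δ := le_trans (card_le_card hCsub)
    (by rw [SimpleGraph.card_neighborFinset_eq_degree]; exact H.degree_le_maxDegree x)
  -- but there are many such vertices
  have hcover : (univ : Finset (Fin (g n))) ⊆
      C ∪ ({x} ∪ S ∪ S.biUnion (fun s => H.neighborFinset s)) := by
    intro z' _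
    by_cases e1 : z' = x
    · exact mem_union_right _ (by subst e1; simp)
    by_cases e2 : z' ∈ S
    · exact mem_union_right _ (by simp [e2])
    by_cases e3 : ∃ s ∈ S, H.Adj z' s
    · obtain ⟨s, hs, hadj⟩ := e3
      refine mem_union_right _ (mem_union_right _ (mem_biUnion.mpr ⟨s, hs, ?_⟩))
      exact (H.mem_neighborFinset s z').mpr hadj.symm
    · exact mem_union_left _ (mem_filter.mpr ⟨mem_univ _, e1, e2,
        fun s hs h => e3 ⟨s, hs, h⟩⟩)
  have hbig : g n ≤ Δ + (1 + k + k * Δ) := by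
    have c1 : (univ : Finset (Fin (g n))).card = g n := by
      rw [card_univ]; exact Fintype.card_fin _
    calc g n = (univ : Finset (Fin (g n))).card := c1.symm
      _ ≤ (C ∪ ({x} ∪ S ∪ S.biUnion (fun s => H.neighborFinset s))).card :=
          card_le_card hcover
      _ ≤ C.card + ({x} ∪ S ∪ S.biUnion (fun s => H.neighborFinset s)).card :=
          card_union_le _ _
      _ ≤ C.card + (({x} ∪ S : Finset _).card
            + (S.biUnion (fun s => H.neighborFinset s)).card) := by
          gcongr; exact card_union_le _ _
      _ ≤ C.card + ((({x} : Finset _).card + S.card)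
            + ∑ s ∈ S, (H.neighborFinset s).card) := by
          gcongr
          · exact card_union_le _ _
          · exact card_biUnion_le
      _ ≤ Δ + (1 + k + k * Δ) := by
          have hsum : ∑ s ∈ S, (H.neighborFinset s).card ≤ k * Δ := by
            calc ∑ s ∈ S, (H.neighborFinset s).card ≤ S.card * Δ := by
                  apply Finset.sum_le_card_nsmul
                  intro s _
                  rw [SimpleGraph.card_neighborFinset_eq_degree]
                  exact H.degree_le_maxDegree s
              _ ≤ k * Δ := by gcongr
          have hCc := hCcard
          simp only [card_singleton]
          omega
  have hexp : (k+1) * (Δ + 1) = Δ + (1 + k + k * Δ) := by ring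
  omega
end

section
/- Define bipartite graphs H^n_i = (P_i, B_i, E_i) recursively: H^n_1 is the star K_{1,n} with center in B_1 and n leaves in P_1; for i ≥ 2, H^n_i consists of n disjoint copies of H^n_{i-1} together with |P_{i-1}| new box-vertices, each new box-vertex adjacent to the images of one fixed point-vertex of H^n_{i-1} in all n copies (so each new box-vertex has exactly n neighbours, one per copy). Then |P_i| = n^i, |B_i| = i·n^{i-1}, every point-vertex of H^n_i has degree i, every box-vertex has degree n, and H^n_i contains no K_{2,2} subgraph. -/
open Finset
open scoped Classical

/-- Point-vertices of `H^n_i`: tuples in `(Fin n)^i` (there are `n^i` of them).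
In the recursive construction, one coordinate plays the role of the copy index
at each level. -/
abbrev PointVtx (n i : ℕ) := Fin i → Fin n

/-- Box-vertices of `H^n_i`: a box is determined by the level `s` at which it was
added together with the values of all coordinates except `s`; it is adjacent to the
`n` points agreeing with it off coordinate `s` (one per copy). There are
`i * n^(i-1)` of them. -/
abbrev BoxVtx (n i : ℕ) := Σ s : Fin i, ({ t : Fin i // t ≠ s } → Fin n)

/-- Vertices of the bipartite graph `H^n_i`. -/
abbrev HVtx (n i : ℕ) := PointVtx n i ⊕ BoxVtx n i

/-- The point-box incidence relation of `H^n_i`. -/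
def HRel (n i : ℕ) : HVtx n i → HVtx n i → Prop
  | Sum.inl p, Sum.inr b => ∀ (t : Fin i) (h : t ≠ b.1), p t = b.2 ⟨t, h⟩
  | _, _ => False

/-- The bipartite graph `H^n_i` of the recursive construction: `H^n_1` is the star
`K_{1,n}`, and `H^n_i` consists of `n` disjoint copies of `H^n_{i-1}` together with
one new box-vertex for each point-vertex of `H^n_{i-1}`, adjacent exactly to its
`n` copies. -/
def HGraph (n i : ℕ) : SimpleGraph (HVtx n i) := SimpleGraph.fromRel (HRel n i)

lemma adj_inl_inr {n i : ℕ} (p : PointVtx n i) (b : BoxVtx n i) :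
    (HGraph n i).Adj (Sum.inl p) (Sum.inr b) ↔ ∀ (t : Fin i) (h : t ≠ b.1), p t = b.2 ⟨t, h⟩ := by
  simp [HGraph, SimpleGraph.fromRel_adj, HRel]
lemma not_adj_inl_inl {n i : ℕ} (p q : PointVtx n i) :
    ¬ (HGraph n i).Adj (Sum.inl p) (Sum.inl q) := by
  simp [HGraph, SimpleGraph.fromRel_adj, HRel]
lemma not_adj_inr_inr {n i : ℕ} (b b' : BoxVtx n i) :
    ¬ (HGraph n i).Adj (Sum.inr b) (Sum.inr b') := by
  simp [HGraph, SimpleGraph.fromRel_adj, HRel]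
lemma adj_inr_inl {n i : ℕ} (p : PointVtx n i) (b : BoxVtx n i) :
    (HGraph n i).Adj (Sum.inr b) (Sum.inl p) ↔ ∀ (t : Fin i) (h : t ≠ b.1), p t = b.2 ⟨t, h⟩ := by
  rw [SimpleGraph.adj_comm]; exact adj_inl_inr p b

lemma nbr_inl {n i : ℕ} (p : PointVtx n i) :
    (HGraph n i).neighborFinset (Sum.inl p) =
      Finset.univ.image (fun s : Fin i => (Sum.inr ⟨s, fun t => p t.1⟩ : HVtx n i)) := by
  ext x
  simp only [SimpleGraph.mem_neighborFinset, Finset.mem_image, Finset.mem_univ, true_and]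
  cases x with
  | inl q => simp [not_adj_inl_inl]
  | inr b =>
    rw [adj_inl_inr]
    constructor
    · intro h
      refine ⟨b.1, ?_⟩
      obtain ⟨s, f⟩ := b
      congr 1
      refine Sigma.ext rfl (heq_of_eq ?_)
      funext t
      exact h t.1 t.2
    · rintro ⟨s, hs⟩ t h
      cases hs
      rfl

lemma deg_inl {n i : ℕ} (p : PointVtx n i) :
    (HGraph n i).degree (Sum.inl p) = i := by
  rw [SimpleGraph.degree, nbr_inl, Finset.card_image_of_injective _ ?_, Finset.card_univ,
    Fintype.card_fin]
  intro a b hab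
  exact congrArg Sigma.fst (Sum.inr.inj hab)

lemma nbr_inr {n i : ℕ} (s : Fin i) (f : { t : Fin i // t ≠ s } → Fin n) :
    (HGraph n i).neighborFinset (Sum.inr ⟨s, f⟩) =
      Finset.univ.image (fun a : Fin n =>
        (Sum.inl (fun t => if h : t = s then a else f ⟨t, h⟩) : HVtx n i)) := by
  ext x
  simp only [SimpleGraph.mem_neighborFinset, Finset.mem_image, Finset.mem_univ, true_and]
  cases x with
  | inr b => simp [not_adj_inr_inr]
  | inl q =>
    rw [adj_inr_inl]
    constructor
    · intro h
      refine ⟨q s, ?_⟩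
      congr 1
      funext t
      by_cases ht : t = s
      · subst ht; simp
      · simp only [dif_neg ht]
        exact (h t ht).symm
    · rintro ⟨a, ha⟩ t ht
      cases ha
      simp [dif_neg ht]

lemma deg_inr {n i : ℕ} (b : BoxVtx n i) :
    (HGraph n i).degree (Sum.inr b) = n := by
  obtain ⟨s, f⟩ := b
  rw [SimpleGraph.degree, nbr_inr, Finset.card_image_of_injective _ ?_, Finset.card_univ,
    Fintype.card_fin]
  intro a c hac
  have := congrFun (Sum.inl.inj hac) s
  simpa using this

lemma common_le_one {n i : ℕ} (u v : HVtx n i) (huv : u ≠ v) :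
    ((HGraph n i).neighborFinset u ∩ (HGraph n i).neighborFinset v).card ≤ 1 := by
  rw [Finset.card_le_one]
  intro a ha c hc
  rw [Finset.mem_inter, SimpleGraph.mem_neighborFinset, SimpleGraph.mem_neighborFinset] at ha hc
  obtain ⟨hau, hav⟩ := ha
  obtain ⟨hcu, hcv⟩ := hc
  cases u with
  | inl p =>
    cases v with
    | inr b =>
      cases a with
      | inl _ => exact absurd hau (not_adj_inl_inl _ _)
      | inr _ => exact absurd hav (not_adj_inr_inr _ _)
    | inl q =>
      have hpq : p ≠ q := fun h => huv (congrArg Sum.inl h)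
      obtain ⟨t0, ht0⟩ := Function.ne_iff.1 hpq
      cases a with
      | inl _ => exact absurd hau (not_adj_inl_inl _ _)
      | inr b =>
        cases c with
        | inl _ => exact absurd hcu (not_adj_inl_inl _ _)
        | inr b' =>
          obtain ⟨s, f⟩ := b
          obtain ⟨s', f'⟩ := b'
          have hpa := (adj_inl_inr p ⟨s, f⟩).1 hau
          have hqa := (adj_inl_inr q ⟨s, f⟩).1 hav
          have hpc := (adj_inl_inr p ⟨s', f'⟩).1 hcu
          have hqc := (adj_inl_inr q ⟨s', f'⟩).1 hcv
          have hs : t0 = s := by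
            by_contra h; exact ht0 ((hpa t0 h).trans (hqa t0 h).symm)
          have hs' : t0 = s' := by
            by_contra h; exact ht0 ((hpc t0 h).trans (hqc t0 h).symm)
          subst hs; subst hs'
          congr 1
          refine Sigma.ext rfl (heq_of_eq ?_)
          funext t
          exact (hpa t.1 t.2).symm.trans (hpc t.1 t.2)
  | inr b =>
    cases v with
    | inl q =>
      cases a with
      | inr _ => exact absurd hau (not_adj_inr_inr _ _)
      | inl _ => exact absurd hav (not_adj_inl_inl _ _)
    | inr b' =>
      cases a with
      | inr _ => exact absurd hau (not_adj_inr_inr _ _)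
      | inl p =>
        cases c with
        | inr _ => exact absurd hcu (not_adj_inr_inr _ _)
        | inl q =>
          obtain ⟨s, f⟩ := b
          obtain ⟨s', f'⟩ := b'
          have hpu := (adj_inr_inl p ⟨s, f⟩).1 hau
          have hpv := (adj_inr_inl p ⟨s', f'⟩).1 hav
          have hqu := (adj_inr_inl q ⟨s, f⟩).1 hcu
          have hqv := (adj_inr_inl q ⟨s', f'⟩).1 hcv
          by_cases hss : s = s'
          · subst hss
            exfalso
            apply huv
            have : f = f' := funext fun t => (hpu t.1 t.2).symm.trans (hpv t.1 t.2)
            rw [this]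
          · have : p = q := by
              funext t
              by_cases ht : t = s
              · have htn : t ≠ s' := ht ▸ hss
                exact (hpv t htn).trans (hqv t htn).symm
              · exact (hpu t ht).trans (hqu t ht).symm
            rw [this]

/-- `H^n_i` has `n^i` point-vertices and `i·n^(i-1)` box-vertices, every
point-vertex has degree `i`, every box-vertex has degree `n`, and the graph
contains no `K_{2,2}` subgraph (any two distinct vertices have at most one common
neighbour). -/
theorem HGraph_properties (n i : ℕ) (hn : 1 ≤ n) (hi : 1 ≤ i) :
    Fintype.card (PointVtx n i) = n ^ i ∧
    Fintype.card (BoxVtx n i) = i * n ^ (i - 1) ∧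
    (∀ p : PointVtx n i, (HGraph n i).degree (Sum.inl p) = i) ∧
    (∀ b : BoxVtx n i, (HGraph n i).degree (Sum.inr b) = n) ∧
    (∀ u v : HVtx n i, u ≠ v →
      ((HGraph n i).neighborFinset u ∩ (HGraph n i).neighborFinset v).card ≤ 1) := by
  refine ⟨by simp, ?_, deg_inl, deg_inr, fun u v h => common_le_one u v h⟩
  have h : ∀ s : Fin i, Fintype.card { t : Fin i // t ≠ s } = i - 1 := by
    intro s
    rw [Fintype.card_subtype_compl]
    simp
  simp only [Fintype.card_sigma, Fintype.card_fun, Fintype.card_fin, h]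
  simp [Finset.sum_const, Finset.card_univ]
end

section
/- There exists a sequence of K_{2,2}-free bipartite graphs (G_n) where G_n has 2n^n vertices and every vertex has degree exactly n; consequently any hereditary class containing all G_n has unbounded functionality. -/
open Finset
open scoped Classical

variable {V : Type*}

/-!
`G_n` is the bipartite Cayley graph of `ZMod (n ^ n)` with respect to `{n ^ i | i < n}`: two
copies of the group, `f` joined to `g` when `g - f = n ^ i`. It is `n`-regular, and `K_{2,2}`-free
because the generating set is a Sidon set (two-term base-`n` representations are unique, and the
sums involved are at most `n ^ n`, so they do not wrap around).

In a `K_{2,2}`-free `d`-regular graph, a vertex `x` is not a function of a set `S` with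
`2 * #S < d` once the graph is large: each `s ∈ S` shares at most one neighbour with `x`, so some
neighbour `z` of `x` sees nothing in `S`; and counting closed neighbourhoods gives a non-neighbour
`z'` of `x` that also sees nothing in `S`. Then `z` and `z'` have the same trace on `S` but differ
on `x`.
-/

namespace Nat

lemma pow_add_pow_lt_pow_add_pow {n i j k l : ℕ} (hn : 2 ≤ n) (hij : i ≤ j) (hjl : j < l) :
    n ^ i + n ^ j < n ^ k + n ^ l :=
  calc n ^ i + n ^ j ≤ 2 * n ^ j := by have := Nat.pow_le_pow_right (by omega) hij (n := n); omega
    _ ≤ n ^ (j + 1) := by rw [pow_succ']; exact Nat.mul_le_mul_right _ hn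
    _ ≤ n ^ l := Nat.pow_le_pow_right (by omega) hjl
    _ < n ^ k + n ^ l := Nat.lt_add_of_pos_left (Nat.pow_pos (by omega))

lemma pow_add_pow_eq_pow_add_pow_iff {n i j k l : ℕ} (hn : 2 ≤ n) :
    n ^ i + n ^ j = n ^ k + n ^ l ↔ i = k ∧ j = l ∨ i = l ∧ j = k := by
  refine ⟨fun h => ?_, by rintro (⟨rfl, rfl⟩ | ⟨rfl, rfl⟩) <;> ring⟩
  wlog hij : i ≤ j generalizing i j
  · rw [add_comm] at h
    have := this h (by omega)
    tauto
  wlog hkl : k ≤ l generalizing k l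
  · rw [add_comm (n ^ k)] at h
    have := this h (by omega)
    tauto
  obtain rfl : j = l := by
    rcases lt_trichotomy j l with hjl | rfl | hlj
    · exact absurd h (pow_add_pow_lt_pow_add_pow hn hij hjl).ne
    · rfl
    · exact absurd h.symm (pow_add_pow_lt_pow_add_pow hn hkl hlj).ne
  exact Or.inl ⟨Nat.pow_right_injective hn (show n ^ i = n ^ k by omega), rfl⟩

lemma pow_add_pow_eq_of_modEq {n N i j k l : ℕ} (hn : 2 ≤ n) (hi : i < N) (hj : j < N)
    (hk : k < N) (hl : l < N) (h : n ^ i + n ^ j ≡ n ^ k + n ^ l [MOD n ^ N]) :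
    n ^ i + n ^ j = n ^ k + n ^ l := by
  have hpos : ∀ e, 0 < n ^ e := fun e => Nat.pow_pos (by omega)
  have hle : ∀ e < N, 2 * n ^ e ≤ n ^ N := fun e he =>
    calc 2 * n ^ e ≤ n * n ^ e := Nat.mul_le_mul_right _ hn
      _ = n ^ (e + 1) := by ring
      _ ≤ n ^ N := Nat.pow_le_pow_right (by omega) he
  have := hpos i; have := hpos j; have := hpos k; have := hpos l
  have := hle i hi; have := hle j hj; have := hle k hk; have := hle l hl
  apply h.eq_of_abs_lt
  rw [abs_sub_lt_iff, Nat.cast_add, Nat.cast_add]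
  omega

end Nat

instance (n : ℕ) : NeZero (n ^ n) := ⟨Nat.pow_self_pos.ne'⟩

def powersBelow (n : ℕ) : Finset (ZMod (n ^ n)) :=
  (range n).image ((n : ZMod (n ^ n)) ^ ·)

lemma ZMod.pow_add_pow_eq_pow_add_pow_iff {n i j k l : ℕ} (hi : i < n) (hj : j < n)
    (hk : k < n) (hl : l < n) :
    (n : ZMod (n ^ n)) ^ i + n ^ j = n ^ k + n ^ l ↔ i = k ∧ j = l ∨ i = l ∧ j = k := by
  refine ⟨fun h => ?_, by rintro (⟨rfl, rfl⟩ | ⟨rfl, rfl⟩) <;> ring⟩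
  by_cases hn : n < 2
  · omega
  rw [← Nat.pow_add_pow_eq_pow_add_pow_iff (n := n) (by omega)]
  refine Nat.pow_add_pow_eq_of_modEq (by omega) hi hj hk hl ?_
  rw [← ZMod.natCast_eq_natCast_iff]
  exact_mod_cast h

lemma card_powersBelow (n : ℕ) : #(powersBelow n) = n := by
  rw [powersBelow, card_image_of_injOn, card_range]
  intro i hi k hk h
  simp only [coe_range, Set.mem_Iio] at hi hk
  have := (ZMod.pow_add_pow_eq_pow_add_pow_iff hi hi hk hk).mp (congrArg (fun a => a + a) h)
  tauto

/-- Sidon sets, stated with cancellation in mind: in a cancellative monoid `a = c` forces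
`b = d`, and `a = d` forces `b = c`. -/
def IsSidon {A : Type*} [Add A] (D : Set A) : Prop :=
  ∀ a ∈ D, ∀ b ∈ D, ∀ c ∈ D, ∀ d ∈ D, a + b = c + d → a = c ∨ a = d

lemma isSidon_powersBelow (n : ℕ) : IsSidon (powersBelow n : Set (ZMod (n ^ n))) := by
  simp only [IsSidon, powersBelow, coe_image, coe_range, Set.mem_image, Set.mem_Iio]
  rintro _ ⟨i, hi, rfl⟩ _ ⟨j, hj, rfl⟩ _ ⟨k, hk, rfl⟩ _ ⟨l, hl, rfl⟩ h
  rcases (ZMod.pow_add_pow_eq_pow_add_pow_iff hi hj hk hl).mp h with ⟨rfl, -⟩ | ⟨rfl, -⟩ <;>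
    simp

lemma IsSidon.eq_or_eq_of_sub_mem {A : Type*} [AddCommGroup A] {D : Set A} (hD : IsSidon D)
    {f f' g g' : A} (hgf : g - f ∈ D) (hgf' : g - f' ∈ D) (hg'f : g' - f ∈ D)
    (hg'f' : g' - f' ∈ D) : f = f' ∨ g = g' := by
  rcases hD _ hgf _ hg'f' _ hgf' _ hg'f (by abel) with h | h
  · exact Or.inl (sub_right_injective h)
  · exact Or.inr (sub_left_injective h)

namespace SimpleGraph

section BipartiteCayley

variable {A : Type*} [AddCommGroup A]

def bipartiteCayley (D : Set A) : SimpleGraph (A ⊕ A) where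
  Adj
    | .inl f, .inr g | .inr g, .inl f => g - f ∈ D
    | _, _ => False
  symm := ⟨by rintro (f | f) (g | g) h <;> exact h⟩
  loopless := ⟨by rintro (f | f) h <;> exact h⟩

variable {D : Set A}

@[simp] lemma bipartiteCayley_adj_inl_inr {f g : A} :
    (bipartiteCayley D).Adj (.inl f) (.inr g) ↔ g - f ∈ D := .rfl

@[simp] lemma bipartiteCayley_adj_inr_inl {f g : A} :
    (bipartiteCayley D).Adj (.inr g) (.inl f) ↔ g - f ∈ D := .rfl

@[simp] lemma not_bipartiteCayley_adj_inl_inl {f g : A} :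
    ¬ (bipartiteCayley D).Adj (.inl f) (.inl g) := id

@[simp] lemma not_bipartiteCayley_adj_inr_inr {f g : A} :
    ¬ (bipartiteCayley D).Adj (.inr f) (.inr g) := id

lemma bipartiteCayley_le_completeBipartiteGraph :
    bipartiteCayley D ≤ completeBipartiteGraph A A := by
  rintro (f | f) (g | g) h <;> simp_all

lemma bipartiteCayley_colorable_two : (bipartiteCayley D).Colorable 2 :=
  (CompleteBipartiteGraph.bicoloring A A).colorable.mono_left
    bipartiteCayley_le_completeBipartiteGraph

variable [Fintype A] [DecidableEq A]

lemma neighborFinset_bipartiteCayley_inl (D : Finset A) (f : A) :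
    (bipartiteCayley (D : Set A)).neighborFinset (.inl f) = D.image (.inr <| f + ·) := by
  ext (g | g)
  · simp
  · simpa using ⟨fun h => ⟨_, h, by abel⟩, by rintro ⟨d, hd, rfl⟩; simpa using hd⟩

lemma neighborFinset_bipartiteCayley_inr (D : Finset A) (g : A) :
    (bipartiteCayley (D : Set A)).neighborFinset (.inr g) = D.image (.inl <| g - ·) := by
  ext (f | f)
  · simpa using ⟨fun h => ⟨_, h, by abel⟩, by rintro ⟨d, hd, rfl⟩; simpa using hd⟩
  · simp

lemma degree_bipartiteCayley (D : Finset A) (v : A ⊕ A) :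
    (bipartiteCayley (D : Set A)).degree v = #D := by
  rcases v with f | g
  · rw [← card_neighborFinset_eq_degree, neighborFinset_bipartiteCayley_inl,
      card_image_of_injective _ fun _ _ h => by simpa using h]
  · rw [← card_neighborFinset_eq_degree, neighborFinset_bipartiteCayley_inr,
      card_image_of_injective _ fun _ _ h => by simpa using h]

lemma card_commonNeighbors_bipartiteCayley_lt_two (hD : IsSidon D) {a b : A ⊕ A} (hab : a ≠ b) :
    #((bipartiteCayley D).neighborFinset a ∩ (bipartiteCayley D).neighborFinset b) < 2 := by
  suffices ∀ u w, (bipartiteCayley D).Adj a u → (bipartiteCayley D).Adj b u →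
      (bipartiteCayley D).Adj a w → (bipartiteCayley D).Adj b w → u = w by
    have : #((bipartiteCayley D).neighborFinset a ∩ (bipartiteCayley D).neighborFinset b) ≤ 1 :=
      card_le_one.mpr fun u hu w hw => by
        simp only [mem_inter, mem_neighborFinset] at hu hw
        exact this u w hu.1 hu.2 hw.1 hw.2
    omega
  intro u w h₁ h₂ h₃ h₄
  rcases a with f | g <;> rcases b with f' | g' <;> rcases u with u | u <;>
    rcases w with w | w <;> simp only [bipartiteCayley_adj_inl_inr, bipartiteCayley_adj_inr_inl,
      not_bipartiteCayley_adj_inl_inl, not_bipartiteCayley_adj_inr_inr, Sum.inl.injEq,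
      Sum.inr.injEq] at h₁ h₂ h₃ h₄ ⊢
  · exact (hD.eq_or_eq_of_sub_mem h₁ h₂ h₃ h₄).resolve_left (by simpa using hab)
  · exact (hD.eq_or_eq_of_sub_mem h₁ h₃ h₂ h₄).resolve_right (by simpa using hab)

end BipartiteCayley

variable {W : Type*} {G : SimpleGraph V} {x : V} {S : Finset V}

lemma not_isFunctionOf_of_adj_of_not_adj {z z' : V} (hz : z ∉ S) (hz'x : z' ≠ x)
    (hz' : z' ∉ S) (hxz : G.Adj x z) (hxz' : ¬ G.Adj x z')
    (htrace : ∀ s ∈ S, (G.Adj z s ↔ G.Adj z' s)) : ¬ IsFunctionOf G x S := by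
  rintro ⟨-, f, hf⟩
  have : (fun s : S => G.Adj z s) = fun s : S => G.Adj z' s :=
    funext fun s => propext (htrace s s.2)
  exact hxz' ((hf z' hz'x hz').2 (this ▸ (hf z hxz.ne' hz).1 hxz))

lemma exists_adj_forall_not_adj [Fintype V] [DecidableEq V]
    (hG : ∀ a b, a ≠ b → #(G.neighborFinset a ∩ G.neighborFinset b) < 2) (hxS : x ∉ S)
    (hdeg : 2 * #S < G.degree x) : ∃ z, G.Adj x z ∧ z ∉ S ∧ ∀ s ∈ S, ¬ G.Adj z s := by
  have hcommon := card_biUnion_le_card_mul S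
    (fun s => G.neighborFinset x ∩ G.neighborFinset s) 1
    fun s hs => Nat.le_of_lt_succ (hG x s (ne_of_mem_of_not_mem hs hxS).symm)
  have hunion := card_union_le S (S.biUnion fun s => G.neighborFinset x ∩ G.neighborFinset s)
  obtain ⟨z, hzx, hzT⟩ := exists_mem_notMem_of_card_lt_card
    (s := S ∪ S.biUnion fun s => G.neighborFinset x ∩ G.neighborFinset s)
    (t := G.neighborFinset x) (by rw [card_neighborFinset_eq_degree]; omega)
  simp only [mem_union, mem_biUnion, mem_inter, not_or, not_exists, not_and] at hzT
  exact ⟨z, (mem_neighborFinset _ _ _).1 hzx, hzT.1,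
    fun s hs hzs => hzT.2 s hs hzx ((mem_neighborFinset _ _ _).2 hzs.symm)⟩

lemma exists_not_adj_forall_not_adj [Fintype V] {d : ℕ} (hdeg : ∀ v, G.degree v ≤ d)
    (hcard : (#S + 1) * (d + 1) < Fintype.card V) :
    ∃ z, z ≠ x ∧ z ∉ S ∧ ¬ G.Adj x z ∧ ∀ s ∈ S, ¬ G.Adj z s := by
  classical
  have hball := card_biUnion_le_card_mul (insert x S) (fun v => insert v (G.neighborFinset v))
    (d + 1) fun v _ => (card_insert_le _ _).trans (Nat.succ_le_succ (hdeg v))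
  have hinsert := Nat.mul_le_mul_right (d + 1) (card_insert_le x S)
  obtain ⟨z, -, hzB⟩ := exists_mem_notMem_of_card_lt_card
    (s := (insert x S).biUnion fun v => insert v (G.neighborFinset v)) (t := univ)
    (by rw [card_univ]; omega)
  simp only [mem_biUnion, mem_insert, mem_neighborFinset, not_exists, not_and,
    not_or] at hzB
  obtain ⟨hzx, hxz⟩ := hzB x (Or.inl rfl)
  exact ⟨z, hzx, fun hz => (hzB z (Or.inr hz)).1 rfl, hxz,
    fun s hs hzs => (hzB s (Or.inr hs)).2 hzs.symm⟩

theorem not_isFunctionOf_of_regular [Fintype V] [DecidableEq V] {d : ℕ}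
    (hG : ∀ a b, a ≠ b → #(G.neighborFinset a ∩ G.neighborFinset b) < 2)
    (hdeg : ∀ v, G.degree v = d) (hSd : 2 * #S < d)
    (hcard : (#S + 1) * (d + 1) < Fintype.card V) : ¬ IsFunctionOf G x S := fun hf => by
  obtain ⟨z, hxz, hz, hzS⟩ := exists_adj_forall_not_adj hG hf.1 (hdeg x ▸ hSd)
  obtain ⟨z', hz'x, hz', hxz', hz'S⟩ :=
    exists_not_adj_forall_not_adj (x := x) (fun v => (hdeg v).le) hcard
  exact not_isFunctionOf_of_adj_of_not_adj hz hz'x hz' hxz hxz'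
    (fun s hs => iff_of_false (hzS s hs) (hz'S s hs)) hf

variable [Fintype V] [Fintype W] {G' : SimpleGraph W}

lemma Iso.map_neighborFinset (e : G ≃g G') (v : V) :
    (G.neighborFinset v).map (e : V ≃ W).toEmbedding = G'.neighborFinset (e v) := by
  ext w
  obtain ⟨u, rfl⟩ := e.surjective w
  simp [e.map_adj_iff]

lemma Iso.card_neighborFinset_inter [DecidableEq V] [DecidableEq W] (e : G ≃g G') (a b : V) :
    #(G'.neighborFinset (e a) ∩ G'.neighborFinset (e b)) =
      #(G.neighborFinset a ∩ G.neighborFinset b) := by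
  rw [← e.map_neighborFinset, ← e.map_neighborFinset, ← map_inter, card_map]

end SimpleGraph

open SimpleGraph

lemma card_sum_zmod_pow_self (n : ℕ) :
    Fintype.card (ZMod (n ^ n) ⊕ ZMod (n ^ n)) = 2 * n ^ n := by
  rw [Fintype.card_sum, ZMod.card, two_mul]

noncomputable def powersBelowGraph (n : ℕ) : SimpleGraph (Fin (2 * n ^ n)) :=
  (bipartiteCayley (powersBelow n : Set (ZMod (n ^ n)))).overFin (card_sum_zmod_pow_self n)

noncomputable def powersBelowGraphIso (n : ℕ) :
    bipartiteCayley (powersBelow n : Set (ZMod (n ^ n))) ≃g powersBelowGraph n :=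
  overFinIso _ _

lemma powersBelowGraph_colorable_two (n : ℕ) : (powersBelowGraph n).Colorable 2 :=
  bipartiteCayley_colorable_two.of_hom (powersBelowGraphIso n).symm.toHom

lemma degree_powersBelowGraph (n : ℕ) (v : Fin (2 * n ^ n)) :
    (powersBelowGraph n).degree v = n := by
  rw [← (powersBelowGraphIso n).apply_symm_apply v, Iso.degree_eq, degree_bipartiteCayley,
    card_powersBelow]

lemma card_commonNeighbors_powersBelowGraph_lt_two (n : ℕ) {a b : Fin (2 * n ^ n)}
    (hab : a ≠ b) :
    #((powersBelowGraph n).neighborFinset a ∩ (powersBelowGraph n).neighborFinset b) < 2 := by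
  let e := powersBelowGraphIso n
  rw [← e.apply_symm_apply a, ← e.apply_symm_apply b, e.card_neighborFinset_inter]
  exact card_commonNeighbors_bipartiteCayley_lt_two (isSidon_powersBelow n)
    (e.symm.injective.ne hab)

/-- There is a sequence of `K_{2,2}`-free bipartite graphs `G_n` with `2·n^n`
vertices in which every vertex has degree exactly `n`; consequently (for every `k`,
some `G_n` has every vertex of functionality greater than `k`, so) any hereditary
class containing all the `G_n` has unbounded functionality. -/
theorem exists_K22_free_regular_sequence :
    ∃ G : ∀ n : ℕ, SimpleGraph (Fin (2 * n ^ n)),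
      (∀ n, 1 ≤ n →
        (G n).Colorable 2 ∧
        (∀ a b : Fin (2 * n ^ n), a ≠ b →
          ((G n).neighborFinset a ∩ (G n).neighborFinset b).card < 2) ∧
        (∀ v, (G n).degree v = n)) ∧
      (∀ k : ℕ, ∃ n, ∀ x : Fin (2 * n ^ n), ∀ S : Finset (Fin (2 * n ^ n)),
        S.card ≤ k → ¬ IsFunctionOf (G n) x S) := by
  refine ⟨powersBelowGraph, fun n _ => ⟨powersBelowGraph_colorable_two n,
    fun _ _ => card_commonNeighbors_powersBelowGraph_lt_two n,
    degree_powersBelowGraph n⟩, fun k => ⟨2 * k + 2, fun _ S hS =>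
      not_isFunctionOf_of_regular (fun _ _ => card_commonNeighbors_powersBelowGraph_lt_two _)
        (degree_powersBelowGraph _) (by omega) ?_⟩⟩
  have : (2 * k + 2) ^ 2 ≤ (2 * k + 2) ^ (2 * k + 2) := Nat.pow_le_pow_right (by omega) (by omega)
  rw [Fintype.card_fin]
  nlinarith
end

section
/- The hereditary closure of hypercube graphs has unbounded functionality: for every k there exists n such that in the n-dimensional hypercube Q_n, no vertex is a function of k other vertices. -/
open Finset
open scoped Classical

variable {V : Type*}

/-- The `n`-dimensional hypercube: vertices are `{0,1}^n`, adjacent iff they differ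
in exactly one coordinate. -/
def cubeGraph (n : ℕ) : SimpleGraph (Fin n → Bool) where
  Adj x y := (univ.filter fun i => x i ≠ y i).card = 1
  symm := by
    constructor
    intro x y h
    simpa [ne_comm] using h
  loopless := by
    constructor
    intro x h
    simp at h

/-!
Flip a coordinate `i` of `x` to get a neighbour `z`, then a second coordinate `j` to get `z'` at
distance 2 from `x`. If `x` agrees at `i` and `j` with every `s ∈ S` within distance 3 of `x`
(such `i ≠ j` exist once `n ≥ 3 |S| + 2`), then `z` and `z'` are at distance at least 2 from
all of `S`. So they see `S` identically, while only `z` is adjacent to `x`.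
-/

open Function

section Hamming

variable {ι : Type*} [Fintype ι] [DecidableEq ι] {β : ι → Type*} [∀ i, DecidableEq (β i)]

theorem hammingDist_update_of_eq {x s : ∀ i, β i} {i : ι} {a : β i} (hxs : x i = s i)
    (ha : a ≠ x i) : hammingDist (update x i a) s = hammingDist x s + 1 := by
  have hsupp : (univ.filter fun t => update x i a t ≠ s t) =
      insert i (univ.filter fun t => x t ≠ s t) := by
    ext t
    by_cases ht : t = i
    · subst ht
      simp [← hxs, ha]
    · simp [ht]
  rw [hammingDist, hsupp, card_insert_of_notMem (by simp [hxs])]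
  rfl

theorem hammingDist_update_self {x : ∀ i, β i} {i : ι} {a : β i} (ha : a ≠ x i) :
    hammingDist (update x i a) x = 1 := by
  simpa using hammingDist_update_of_eq rfl ha

theorem exists_ne_agree_of_hammingDist_le (x : ∀ i, β i) (S : Finset (∀ i, β i)) (r : ℕ)
    (hcard : r * #S + 2 ≤ Fintype.card ι) :
    ∃ i j, i ≠ j ∧ ∀ s ∈ S, hammingDist x s ≤ r → x i = s i ∧ x j = s j := by
  set B := {s ∈ S | hammingDist x s ≤ r}.biUnion fun s => ({t | x t ≠ s t} : Finset ι)
  have hB : #B ≤ r * #S :=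
    calc #B ≤ #{s ∈ S | hammingDist x s ≤ r} * r :=
          card_biUnion_le_card_mul _ _ _ fun s hs => (mem_filter.1 hs).2
      _ ≤ r * #S := by rw [mul_comm]; exact Nat.mul_le_mul_left r (card_filter_le _ _)
  have hcompl : 1 < #Bᶜ := by rw [card_compl]; omega
  obtain ⟨i, hi, j, hj, hij⟩ := one_lt_card.1 hcompl
  refine ⟨i, j, hij, fun s hs hr => ⟨?_, ?_⟩⟩ <;> by_contra hne
  · exact mem_compl.1 hi (mem_biUnion.2 ⟨s, mem_filter.2 ⟨hs, hr⟩, by simpa using hne⟩)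
  · exact mem_compl.1 hj (mem_biUnion.2 ⟨s, mem_filter.2 ⟨hs, hr⟩, by simpa using hne⟩)

theorem two_le_hammingDist_update_update {x s : ∀ i, β i} {i j : ι} {a : β i} {b : β j}
    (hij : i ≠ j) (ha : a ≠ x i) (hb : b ≠ x j) (hsx : s ≠ x)
    (hagree : hammingDist x s ≤ 3 → x i = s i ∧ x j = s j) :
    2 ≤ hammingDist (update x i a) s ∧ 2 ≤ hammingDist (update (update x i a) j b) s := by
  have hxj : update x i a j = x j := update_of_ne hij.symm _ _
  have hb' : b ≠ update x i a j := hxj ▸ hb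
  by_cases hnear : hammingDist x s ≤ 3
  · obtain ⟨hi, hj⟩ := hagree hnear
    have hpos := hammingDist_pos.2 hsx.symm
    have hz := hammingDist_update_of_eq hi ha
    have hz' := hammingDist_update_of_eq (hxj.trans hj) hb'
    omega
  · have hz := hammingDist_update_self ha
    have hz' := hammingDist_update_self hb'
    have h₁ := hammingDist_triangle_left x s (update x i a)
    have h₂ := hammingDist_triangle_left x s (update (update x i a) j b)
    have h₃ := hammingDist_triangle (update (update x i a) j b) (update x i a) x
    omega

end Hamming

theorem IsFunctionOf.adj_iff_adj {G : SimpleGraph V} {x z z' : V} {S : Finset V}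
    (hfun : IsFunctionOf G x S) (hz : z ≠ x) (hz' : z' ≠ x) (hzS : z ∉ S) (hz'S : z' ∉ S)
    (hS : ∀ s ∈ S, G.Adj z s ↔ G.Adj z' s) : G.Adj x z ↔ G.Adj x z' := by
  obtain ⟨-, f, hf⟩ := hfun
  have hpattern : (fun s : S => G.Adj z s) = fun s : S => G.Adj z' s :=
    funext fun s => propext (hS s s.2)
  rw [hf z hz hzS, hf z' hz' hz'S, hpattern]

theorem cubeGraph_adj_iff {n : ℕ} {x y : Fin n → Bool} :
    (cubeGraph n).Adj x y ↔ hammingDist x y = 1 :=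
  Iff.rfl

/-- The hereditary closure of hypercubes has unbounded functionality: for every `k`
there is `n` such that in `Q_n` no vertex is a function of at most `k` other
vertices. -/
theorem hypercube_unbounded_functionality :
    ∀ k : ℕ, ∃ n : ℕ, ∀ x : Fin n → Bool, ∀ S : Finset (Fin n → Bool),
      S.card ≤ k → ¬ IsFunctionOf (cubeGraph n) x S := by
  intro k
  refine ⟨3 * k + 2, fun x S hS hfun => ?_⟩
  obtain ⟨i, j, hij, hagree⟩ := exists_ne_agree_of_hammingDist_le x S 3 (by simp; omega)
  set z := update x i (!x i)
  set z' := update z j (!x j)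
  have hfar : ∀ s ∈ S, 2 ≤ hammingDist z s ∧ 2 ≤ hammingDist z' s := fun s hs =>
    two_le_hammingDist_update_update hij (by simp) (by simp) (ne_of_mem_of_not_mem hs hfun.1)
      (hagree s hs)
  have hzx : hammingDist z x = 1 := hammingDist_update_self (by simp)
  have hz'x : hammingDist z' x = 2 := by
    rw [hammingDist_update_of_eq (update_of_ne hij.symm _ _) (by simp [update_of_ne hij.symm]),
      hzx]
  have hzS : z ∉ S := fun h => by simpa using (hfar z h).1
  have hz'S : z' ∉ S := fun h => by simpa using (hfar z' h).2
  have hsame : ∀ s ∈ S, (cubeGraph _).Adj z s ↔ (cubeGraph _).Adj z' s := fun s hs => by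
    simp only [cubeGraph_adj_iff]
    have := hfar s hs
    omega
  have hadj := hfun.adj_iff_adj (z := z) (z' := z') (hammingDist_ne_zero.1 (by omega))
    (hammingDist_ne_zero.1 (by omega)) hzS hz'S hsame
  rw [cubeGraph_adj_iff, cubeGraph_adj_iff, hammingDist_comm, hzx, hammingDist_comm, hz'x] at hadj
  simp at hadj
end

section
/- Let k ≥ 2 and define B_{11} = {(pk − q, qk + p) : 1 ≤ p ≤ k, 0 ≤ q ≤ k − 1} ⊆ ℤ². Then for any two distinct points u, v ∈ B_{11}, the Manhattan distance |u_x − v_x| + |u_y − v_y| is at least k + 1. -/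
/-- For `k ≥ 2`, any two distinct points of
`B₁₁ = {(pk − q, qk + p) : 1 ≤ p ≤ k, 0 ≤ q ≤ k − 1}` are at Manhattan distance at
least `k` (in fact at least `k + 1`). -/
theorem B11_manhattan_dist (k p q p' q' : ℤ) (hk : 2 ≤ k)
    (hp1 : 1 ≤ p) (hpk : p ≤ k) (hq0 : 0 ≤ q) (hqk : q ≤ k - 1)
    (hp1' : 1 ≤ p') (hpk' : p' ≤ k) (hq0' : 0 ≤ q') (hqk' : q' ≤ k - 1)
    (hne : (p * k - q, q * k + p) ≠ (p' * k - q', q' * k + p')) :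
    k ≤ |(p * k - q) - (p' * k - q')| + |(q * k + p) - (q' * k + p')| ∧
    k + 1 ≤ |(p * k - q) - (p' * k - q')| + |(q * k + p) - (q' * k + p')| := by
  have hkpos : (0:ℤ) < k := by linarith
  set A := (p * k - q) - (p' * k - q') with hA
  set B := (q * k + p) - (q' * k + p') with hB
  have hab : p ≠ p' ∨ q ≠ q' := by
    by_contra h; push_neg at h
    exact hne (by rw [h.1, h.2])
  have h1 : |A| * k + |B| ≥ |p - p'| * (k^2 + 1) := by
    have e : k * A + B = (p - p') * (k^2 + 1) := by rw [hA, hB]; ring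
    have := abs_add_le (k * A) B
    rw [e, abs_mul, abs_mul, abs_of_pos hkpos,
      abs_of_pos (by positivity : (0:ℤ) < k^2 + 1)] at this
    linarith
  have h2 : |A| + |B| * k ≥ |q - q'| * (k^2 + 1) := by
    have e : k * B - A = (q - q') * (k^2 + 1) := by rw [hA, hB]; ring
    have := abs_sub (k * B) A
    rw [e, abs_mul, abs_mul, abs_of_pos hkpos,
      abs_of_pos (by positivity : (0:ℤ) < k^2 + 1)] at this
    linarith
  have hAnn : 0 ≤ |A| := abs_nonneg _
  have hBnn : 0 ≤ |B| := abs_nonneg _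
  have key : k + 1 ≤ |A| + |B| := by
    by_cases hq' : q = q'
    · have hp' : p ≠ p' := by tauto
      have : 1 ≤ |p - p'| := by
        rcases abs_pos.mpr (sub_ne_zero.mpr hp') with h; omega
      have hB0 : |B| = |p - p'| := by rw [hB, hq']; congr 1; ring
      have hA0 : |A| = |p - p'| * k := by
        rw [hA, hq', show p*k - q' - (p'*k - q') = (p - p') * k by ring,
          abs_mul, abs_of_pos hkpos]
      nlinarith
    · by_cases hp' : p = p'
      · have : 1 ≤ |q - q'| := by
          rcases abs_pos.mpr (sub_ne_zero.mpr hq') with h; omega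
        have hA0 : |A| = |q - q'| := by
          rw [hA, hp', show p'*k - q - (p'*k - q') = -(q - q') by ring, abs_neg]
        have hB0 : |B| = |q - q'| * k := by
          rw [hB, hp', show q*k + p' - (q'*k + p') = (q - q') * k by ring,
            abs_mul, abs_of_pos hkpos]
        nlinarith
      · have ha : 1 ≤ |p - p'| := by
          rcases abs_pos.mpr (sub_ne_zero.mpr hp') with h; omega
        have hb : 1 ≤ |q - q'| := by
          rcases abs_pos.mpr (sub_ne_zero.mpr hq') with h; omega
        -- (k+1)(|A|+|B|) ≥ 2(k²+1) ≥ (k+1)²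
        nlinarith [mul_le_mul ha (le_refl ((k:ℤ)^2+1)) (by positivity) (by linarith),
          mul_le_mul hb (le_refl ((k:ℤ)^2+1)) (by positivity) (by linarith)]
  exact ⟨by linarith, key⟩
end

section
/- Let k ≥ 2, B_{11} = {(pk − q, qk + p) : 1 ≤ p ≤ k, 0 ≤ q ≤ k − 1}, and for (i,j) ∈ [k]² let B_{ij} = B_{11} + ((i−1)k², (j−1)k²). Then for any two distinct points u ∈ B_{ij} and v ∈ B_{i'j'} (over all i,j,i',j' ∈ [k]), the Manhattan distance between u and v is at least k. -/
private lemma small_of_mul (K t : ℤ) (hK : 2 ≤ K) (h : |K * t| ≤ 2 * K - 2) : |t| ≤ 1 := by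
  rw [abs_mul, abs_of_pos (by linarith : (0:ℤ) < K)] at h
  by_contra hc
  push_neg at hc
  have h2 : 2 ≤ |t| := hc
  have : K * 2 ≤ K * |t| := mul_le_mul_of_nonneg_left h2 (by linarith)
  linarith

private lemma key (K A B X Y C D : ℤ) (hK : 2 ≤ K)
    (hA : |A| ≤ K - 1) (hB : |B| ≤ K - 1)
    (hX : X = -B + K * (A + C * K)) (hY : Y = A + K * (B + D * K))
    (hne : X ≠ 0 ∨ Y ≠ 0) : K ≤ |X| + |Y| := by
  by_contra hcon
  push_neg at hcon
  obtain ⟨m, hm⟩ : ∃ m, A + C * K = m := ⟨_, rfl⟩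
  obtain ⟨n, hn⟩ : ∃ n, B + D * K = n := ⟨_, rfl⟩
  rw [hm] at hX
  rw [hn] at hY
  have hcon' : |X| + |Y| + 1 ≤ K := Int.lt_iff_add_one_le.mp hcon
  have hXb : |X| ≤ K - 1 := by linarith [abs_nonneg Y]
  have hYb : |Y| ≤ K - 1 := by linarith [abs_nonneg X]
  have hKm : |K * m| ≤ 2 * K - 2 := by
    have e : K * m = X + B := by rw [hX]; ring
    rw [e]
    exact le_trans (abs_add_le X B) (by linarith)
  have hKn : |K * n| ≤ 2 * K - 2 := by
    have e : K * n = Y - A := by rw [hY]; ring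
    rw [e]
    exact le_trans (abs_sub Y A) (by linarith)
  have hmle := small_of_mul K m hK hKm
  have hnle := small_of_mul K n hK hKn
  have hKC : |K * C| ≤ 2 * K - 2 := by
    have e : K * C = m - A := by rw [← hm]; ring
    rw [e]
    exact le_trans (abs_sub m A) (by linarith)
  have hKD : |K * D| ≤ 2 * K - 2 := by
    have e : K * D = n - B := by rw [← hn]; ring
    rw [e]
    exact le_trans (abs_sub n B) (by linarith)
  have hCle := small_of_mul K C hK hKC
  have hDle := small_of_mul K D hK hKD
  rw [abs_le] at hmle hnle hCle hDle hA hB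
  obtain ⟨hm1, hm2⟩ := hmle
  obtain ⟨hn1, hn2⟩ := hnle
  obtain ⟨hC1, hC2⟩ := hCle
  obtain ⟨hD1, hD2⟩ := hDle
  simp only [Int.abs_eq_natAbs] at hcon'
  interval_cases m <;> interval_cases n <;> interval_cases C <;> interval_cases D <;>
    rcases hne with hne | hne <;> omega

/-- For `k ≥ 2`, with `B₁₁ = {(pk − q, qk + p) : 1 ≤ p ≤ k, 0 ≤ q ≤ k − 1}` and
`B_{ij} = B₁₁ + ((i−1)k², (j−1)k²)` for `i, j ∈ [k]`, any two distinct points of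
`⋃_{i,j} B_{ij}` are at Manhattan distance at least `k`. -/
theorem B_union_manhattan_dist (k p q i j p' q' i' j' : ℤ) (hk : 2 ≤ k)
    (hp1 : 1 ≤ p) (hpk : p ≤ k) (hq0 : 0 ≤ q) (hqk : q ≤ k - 1)
    (hi1 : 1 ≤ i) (hik : i ≤ k) (hj1 : 1 ≤ j) (hjk : j ≤ k)
    (hp1' : 1 ≤ p') (hpk' : p' ≤ k) (hq0' : 0 ≤ q') (hqk' : q' ≤ k - 1)
    (hi1' : 1 ≤ i') (hik' : i' ≤ k) (hj1' : 1 ≤ j') (hjk' : j' ≤ k)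
    (hne : (p * k - q + (i - 1) * k ^ 2, q * k + p + (j - 1) * k ^ 2) ≠
           (p' * k - q' + (i' - 1) * k ^ 2, q' * k + p' + (j' - 1) * k ^ 2)) :
    k ≤ |(p * k - q + (i - 1) * k ^ 2) - (p' * k - q' + (i' - 1) * k ^ 2)| +
        |(q * k + p + (j - 1) * k ^ 2) - (q' * k + p' + (j' - 1) * k ^ 2)| := by
  refine key k (p - p') (q - q') _ _ (i - i') (j - j') hk ?_ ?_ (by ring) (by ring) ?_
  · rw [abs_le]; omega
  · rw [abs_le]; omega
  · by_contra hc
    push_neg at hc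
    exact hne (by rw [Prod.mk.injEq]; exact ⟨by linarith [hc.1], by linarith [hc.2]⟩)
end

section
/- For each integer i ∈ [k³], the set B = ∪_{i,j∈[k]} B_{ij} (where B_{11} = {(pk−q, qk+p) : 1 ≤ p ≤ k, 0 ≤ q ≤ k−1} and B_{ij} = B_{11} + ((i−1)k², (j−1)k²)) contains exactly k points with first coordinate equal to i, and exactly k points with second coordinate equal to i. -/
open Finset

/-- The set `B = ⋃_{i,j ∈ [k]} B_{ij} ⊆ ℤ²`, where
`B₁₁ = {(pk − q, qk + p) : 1 ≤ p ≤ k, 0 ≤ q ≤ k − 1}` and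
`B_{ij} = B₁₁ + ((i−1)k², (j−1)k²)`. -/
noncomputable def Bset (k : ℕ) : Finset (ℤ × ℤ) :=
  ((Finset.Icc (1 : ℤ) k ×ˢ Finset.Icc (0 : ℤ) ((k : ℤ) - 1)) ×ˢ
      (Finset.Icc (1 : ℤ) k ×ˢ Finset.Icc (1 : ℤ) k)).image
    fun x => (x.1.1 * k - x.1.2 + (x.2.1 - 1) * (k : ℤ) ^ 2,
              x.1.2 * k + x.1.1 + (x.2.2 - 1) * (k : ℤ) ^ 2)

/-! The point `(pk − q + (i−1)k², qk + p + (j−1)k²)` of `B_{ij}` has first coordinate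
`1 + (k−1−q) + (p−1)k + (i−1)k²` and second coordinate `1 + (p−1) + qk + (j−1)k²`, both with
base-`k` digits in `[0, k)`. So a prescribed first coordinate `m ∈ [k³]` fixes `p, q, i` through the
digits of `m − 1` and leaves `j` free, and symmetrically for the second coordinate; reading both
coordinates' digits also shows that the parametrisation of `B` is injective. -/

theorem Finset.card_filter_image_of_injOn {α β : Type*} [DecidableEq β] {s : Finset α}
    {f : α → β} (hf : Set.InjOn f s) (p : β → Prop) [DecidablePred p] :
    #((s.image f).filter p) = #(s.filter fun a => p (f a)) := by
  rw [filter_image, card_image_of_injOn (hf.mono (coe_subset.mpr (filter_subset _ _)))]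

namespace Int

theorem add_mul_eq_iff {k a x n : ℤ} (ha₀ : 0 ≤ a) (hak : a < k) :
    a + x * k = n ↔ a = n % k ∧ x = n / k := by
  constructor
  · rintro rfl
    rw [add_mul_emod_self_right, emod_eq_of_lt ha₀ hak, add_mul_ediv_right _ _ (by omega),
      ediv_eq_zero_of_lt ha₀ hak, zero_add]
    exact ⟨rfl, rfl⟩
  · rintro ⟨rfl, rfl⟩
    rw [mul_comm]
    exact emod_add_mul_ediv n k

theorem add_mul_add_mul_sq_eq_iff {k a b c n : ℤ} (ha₀ : 0 ≤ a) (hak : a < k)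
    (hb₀ : 0 ≤ b) (hbk : b < k) :
    a + b * k + c * k ^ 2 = n ↔ a = n % k ∧ b = n / k % k ∧ c = n / k / k := by
  rw [show a + b * k + c * k ^ 2 = a + (b + c * k) * k by ring, add_mul_eq_iff ha₀ hak,
    add_mul_eq_iff hb₀ hbk]

theorem digits_bounds {k n : ℤ} (hk : 0 < k) (hn₀ : 0 ≤ n) (hn : n < k ^ 3) :
    (0 ≤ n % k ∧ n % k < k) ∧ (0 ≤ n / k % k ∧ n / k % k < k) ∧
      (0 ≤ n / k / k ∧ n / k / k < k) := by
  refine ⟨⟨emod_nonneg _ hk.ne', emod_lt_of_pos _ hk⟩,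
    ⟨emod_nonneg _ hk.ne', emod_lt_of_pos _ hk⟩, ⟨?_, ?_⟩⟩
  · exact ediv_nonneg (ediv_nonneg hn₀ hk.le) hk.le
  · rw [Int.ediv_lt_iff_lt_mul hk, Int.ediv_lt_iff_lt_mul hk]
    linarith

end Int

namespace Bset

variable (k : ℕ)

noncomputable def index : Finset ((ℤ × ℤ) × (ℤ × ℤ)) :=
  (Icc (1 : ℤ) k ×ˢ Icc (0 : ℤ) ((k : ℤ) - 1)) ×ˢ (Icc (1 : ℤ) k ×ˢ Icc (1 : ℤ) k)

def point (x : (ℤ × ℤ) × (ℤ × ℤ)) : ℤ × ℤ :=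
  (x.1.1 * k - x.1.2 + (x.2.1 - 1) * (k : ℤ) ^ 2, x.1.2 * k + x.1.1 + (x.2.2 - 1) * (k : ℤ) ^ 2)

theorem eq_image : Bset k = (index k).image (point k) := rfl

variable {k}

theorem point_fst_eq_iff {p q i j m : ℤ} (hx : ((p, q), (i, j)) ∈ index k) :
    (point k ((p, q), (i, j))).1 = m ↔
      k - 1 - q = (m - 1) % k ∧ p - 1 = (m - 1) / k % k ∧ i - 1 = (m - 1) / k / k := by
  simp only [index, mem_product, mem_Icc] at hx
  rw [← Int.add_mul_add_mul_sq_eq_iff (by omega) (by omega) (by omega) (by omega), point]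
  constructor <;> intro h <;> linear_combination h

theorem point_snd_eq_iff {p q i j m : ℤ} (hx : ((p, q), (i, j)) ∈ index k) :
    (point k ((p, q), (i, j))).2 = m ↔
      p - 1 = (m - 1) % k ∧ q = (m - 1) / k % k ∧ j - 1 = (m - 1) / k / k := by
  simp only [index, mem_product, mem_Icc] at hx
  rw [← Int.add_mul_add_mul_sq_eq_iff (by omega) (by omega) (by omega) (by omega), point]
  constructor <;> intro h <;> linear_combination h

theorem injOn_point : Set.InjOn (point k) (index k) := by
  rintro ⟨⟨p, q⟩, i, j⟩ hx ⟨⟨p', q'⟩, i', j'⟩ hy h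
  obtain ⟨hq, hp, hi⟩ := (point_fst_eq_iff hx).1 rfl
  obtain ⟨hq', hp', hi'⟩ := (point_fst_eq_iff hy).1 (congrArg Prod.fst h).symm
  obtain ⟨-, -, hj⟩ := (point_snd_eq_iff hx).1 rfl
  obtain ⟨-, -, hj'⟩ := (point_snd_eq_iff hy).1 (congrArg Prod.snd h).symm
  simp only [Prod.mk.injEq]
  omega

variable {m : ℤ}

theorem digits_bounds_of_mem (hm : m ∈ Icc (1 : ℤ) ((k : ℤ) ^ 3)) :
    (0 ≤ (m - 1) % k ∧ (m - 1) % k < k) ∧ (0 ≤ (m - 1) / k % k ∧ (m - 1) / k % k < k) ∧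
      (0 ≤ (m - 1) / k / k ∧ (m - 1) / k / k < k) := by
  rw [mem_Icc] at hm
  have hk : 0 < k := Nat.pos_of_ne_zero (by rintro rfl; simp at hm; omega)
  exact Int.digits_bounds (by exact_mod_cast hk) (by omega) (by omega)

theorem filter_index_point_fst_eq (hm : m ∈ Icc (1 : ℤ) ((k : ℤ) ^ 3)) :
    (index k).filter (fun x => (point k x).1 = m) =
      {((m - 1) / k % k + 1, k - 1 - (m - 1) % k)} ×ˢ
        ({(m - 1) / k / k + 1} ×ˢ Icc 1 (k : ℤ)) := by
  have := digits_bounds_of_mem hm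
  ext ⟨⟨p, q⟩, i, j⟩
  rw [mem_filter]
  constructor
  · rintro ⟨hx, h⟩
    have := (point_fst_eq_iff hx).1 h
    simp only [index, mem_product, mem_Icc, mem_singleton, Prod.mk.injEq] at hx ⊢
    omega
  · intro h
    simp only [mem_product, mem_Icc, mem_singleton, Prod.mk.injEq] at h
    have hx : ((p, q), (i, j)) ∈ index k := by
      simp only [index, mem_product, mem_Icc]
      omega
    exact ⟨hx, (point_fst_eq_iff hx).2 (by omega)⟩

theorem filter_index_point_snd_eq (hm : m ∈ Icc (1 : ℤ) ((k : ℤ) ^ 3)) :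
    (index k).filter (fun x => (point k x).2 = m) =
      {((m - 1) % k + 1, (m - 1) / k % k)} ×ˢ
        (Icc 1 (k : ℤ) ×ˢ {(m - 1) / k / k + 1}) := by
  have := digits_bounds_of_mem hm
  ext ⟨⟨p, q⟩, i, j⟩
  rw [mem_filter]
  constructor
  · rintro ⟨hx, h⟩
    have := (point_snd_eq_iff hx).1 h
    simp only [index, mem_product, mem_Icc, mem_singleton, Prod.mk.injEq] at hx ⊢
    omega
  · intro h
    simp only [mem_product, mem_Icc, mem_singleton, Prod.mk.injEq] at h
    have hx : ((p, q), (i, j)) ∈ index k := by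
      simp only [index, mem_product, mem_Icc]
      omega
    exact ⟨hx, (point_snd_eq_iff hx).2 (by omega)⟩

end Bset

theorem Bset_coordinate_count_general (k : ℕ) (m : ℤ)
    (hm : m ∈ Finset.Icc (1 : ℤ) ((k : ℤ) ^ 3)) :
    ((Bset k).filter fun b => b.1 = m).card = k ∧
    ((Bset k).filter fun b => b.2 = m).card = k := by
  simp only [Bset.eq_image, card_filter_image_of_injOn Bset.injOn_point,
    Bset.filter_index_point_fst_eq hm, Bset.filter_index_point_snd_eq hm]
  simp

/-- For each `m ∈ [k³]`, the set `B` contains exactly `k` points with first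
coordinate `m`, and exactly `k` points with second coordinate `m`. -/
theorem Bset_coordinate_count (k : ℕ) (hk : 2 ≤ k) (m : ℤ)
    (hm : m ∈ Finset.Icc (1 : ℤ) ((k : ℤ) ^ 3)) :
    ((Bset k).filter fun b => b.1 = m).card = k ∧
    ((Bset k).filter fun b => b.2 = m).card = k :=
  Bset_coordinate_count_general k m hm
end
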